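/- arXiv:1803.06547 — 2 statements merged into one kernel-verified Lean document; each statement's English description precedes it below -/
import Mathlib

section
/- Let n, p, r, h, r0, r1, h0, h1, h2, s1, d0, d1, d2, hh be integers with p > 0, r1 ≥ 0, n > 0, 4 * (n * n) = p + 5, r = r1 * n + r0, h = h2 * (n * n) + h1 * n + h0, s1 = r1 + r1 / 4, r1 % 4 = 0, d0 = h0 * r0 + h1 * s1, d1 = h0 * r1 + h1 * r0 + h2 * s1, d2 = h2 * r0, and hh = d2 * (n * n) + d1 * n + d0. Then (h * r) mod p = hh mod p. -/
/-! Modulo `p` we have `4 n² ≡ 5`, so for `r₁ = 4k` the term `r₁ n²` may be replaced by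
`5k = r₁ + r₁ / 4 = s₁`. Multiplying out `h * r` and making this replacement in the `n³` and
`n²` terms gives exactly `hh`: indeed `h * r - hh = (h₂ n + h₁) (r₁ n² - s₁)`. -/

theorem Int.mul_mul_sq_modEq_of_mul_sq_eq {c n p m : ℤ} (h : c * (n * n) = p + m) (k : ℤ) :
    c * k * (n * n) ≡ k * m [ZMOD p] :=
  Int.modEq_iff_dvd.mpr ⟨-k, by linear_combination (-k) * h⟩

theorem poly_multiply_general (n p r h r0 r1 h0 h1 h2 s1 d0 d1 d2 hh : ℤ)
    (h4 : 4 * (n * n) = p + 5)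
    (hr : r = r1 * n + r0)
    (hh' : h = h2 * (n * n) + h1 * n + h0)
    (hs1 : s1 = r1 + r1 / 4)
    (hr14 : r1 % 4 = 0)
    (hd0 : d0 = h0 * r0 + h1 * s1)
    (hd1 : d1 = h0 * r1 + h1 * r0 + h2 * s1)
    (hd2 : d2 = h2 * r0)
    (hhh : hh = d2 * (n * n) + d1 * n + d0) :
    (h * r) % p = hh % p := by
  obtain ⟨k, rfl⟩ : 4 ∣ r1 := Int.dvd_of_emod_eq_zero hr14
  have hs1k : s1 = k * 5 := by omega
  have hreduce : 4 * k * (n * n) ≡ s1 [ZMOD p] :=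
    hs1k ▸ Int.mul_mul_sq_modEq_of_mul_sq_eq h4 k
  have hexpand : h * r = hh + (h2 * n + h1) * (4 * k * (n * n) - s1) := by
    subst hr hh' hhh hd0 hd1 hd2
    ring
  rw [hexpand]
  have hshift := ((hreduce.sub_right s1).mul_left (h2 * n + h1)).add_left hh
  rwa [sub_self, mul_zero, add_zero] at hshift

theorem poly_multiply (n p r h r0 r1 h0 h1 h2 s1 d0 d1 d2 hh : ℤ)
    (hp : p > 0) (hr1 : r1 ≥ 0) (hn : n > 0)
    (h4 : 4 * (n * n) = p + 5)
    (hr : r = r1 * n + r0)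
    (hh' : h = h2 * (n * n) + h1 * n + h0)
    (hs1 : s1 = r1 + r1 / 4)
    (hr14 : r1 % 4 = 0)
    (hd0 : d0 = h0 * r0 + h1 * s1)
    (hd1 : d1 = h0 * r1 + h1 * r0 + h2 * s1)
    (hd2 : d2 = h2 * r0)
    (hhh : hh = d2 * (n * n) + d1 * n + d0) :
    (h * r) % p = hh % p :=
  poly_multiply_general n p r h r0 r1 h0 h1 h2 s1 d0 d1 d2 hh h4 hr hh' hs1 hr14 hd0 hd1 hd2 hhh
end

section
/- Define parser t = (list byte) → option (t × ℕ) and say s : t → list byte is a serializer for p : parser t if for all x, p (s x) = some (x, length (s x)). If s1 is a serializer for p1 : parser t1 and s2 is a serializer for p2 : parser t2, then the pair serializer (fun (x, y) => s1 x ++ s2 y) is a serializer for the pair parser that first runs p1, consumes the indicated number of bytes, then runs p2 on the remainder (provided p1 consumes exactly the bytes it reports, i.e., p1 only reads a prefix of its input of the reported length: for all input b and all suffixes b', if p1 b = some (x, n) with n ≤ length b then p1 (take n b ++ b') = some (x, n)). -/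
abbrev Byte := UInt8

def Parser (t : Type*) := List Byte → Option (t × ℕ)

def IsSerializer {t : Type*} (p : Parser t) (s : t → List Byte) : Prop :=
  ∀ x, p (s x) = some (x, (s x).length)

def pPair {t1 t2 : Type*} (p1 : Parser t1) (p2 : Parser t2) : Parser (t1 × t2) :=
  fun b =>
    match p1 b with
    | none => none
    | some (x, n) =>
      match p2 (b.drop n) with
      | none => none
      | some (y, m) => some ((x, y), n + m)

/-- p only reads a prefix of its input of the reported length -/
def PrefixStable {t : Type*} (p : Parser t) : Prop :=
  ∀ (b : List Byte) (b' : List Byte) (x : t) (n : ℕ),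
    p b = some (x, n) → n ≤ b.length → p (b.take n ++ b') = some (x, n)

theorem pPair_eq_some {t1 t2 : Type*} {p1 : Parser t1} {p2 : Parser t2} {b : List Byte}
    {x : t1} {y : t2} {n m : ℕ} (h1 : p1 b = some (x, n)) (h2 : p2 (b.drop n) = some (y, m)) :
    pPair p1 p2 b = some ((x, y), n + m) := by
  simp only [pPair, h1, h2]

theorem PrefixStable.apply_append_of_eq_length {t : Type*} {p : Parser t} (hp : PrefixStable p)
    {b : List Byte} {x : t} (h : p b = some (x, b.length)) (b' : List Byte) :
    p (b ++ b') = some (x, b.length) := by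
  simpa using hp b b' x b.length h le_rfl

theorem IsSerializer.apply_append {t : Type*} {p : Parser t} {s : t → List Byte}
    (hs : IsSerializer p s) (hp : PrefixStable p) (x : t) (b' : List Byte) :
    p (s x ++ b') = some (x, (s x).length) :=
  hp.apply_append_of_eq_length (hs x) b'

theorem sPair_isSerializer {t1 t2 : Type*}
    (p1 : Parser t1) (p2 : Parser t2)
    (s1 : t1 → List Byte) (s2 : t2 → List Byte)
    (hs1 : IsSerializer p1 s1) (hs2 : IsSerializer p2 s2)
    (hp1 : PrefixStable p1) :
    IsSerializer (pPair p1 p2) (fun xy => s1 xy.1 ++ s2 xy.2) := by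
  rintro ⟨x, y⟩
  have hrest : p2 ((s1 x ++ s2 y).drop (s1 x).length) = some (y, (s2 y).length) := by
    rw [List.drop_left]
    exact hs2 y
  rw [List.length_append]
  exact pPair_eq_some (hs1.apply_append hp1 x (s2 y)) hrest
end
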